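/- arXiv:1211.5299 — 2 statements merged into one kernel-verified Lean document; each statement's English description precedes it below -/
import Mathlib

section
/- For every α ∈ [0,1), every ε ∈ (0,1) and every positive integer m, the infinite product ∏_{n≥1, n≠m} |λ_n|⁴ / (|λ_{|n−m|}|² · |λ_{m+n}|²) converges and is at most 16. -/
/-!
Write `G k = |λ_k|² = k² + ε² k^{4α}` and `R k = G (k + m) / G k`. For `n > m` the factor is
`R (n - m) / R n`, and for `0 < n < m` it is `G n / (G (m - n) R n)`; the products over `n < m`
cancel by the reflection `n ↦ m - n`, so the partial products telescope to
`R m / ∏_{N - m ≤ k < N} R k ≤ R m = G (2m) / G m ≤ 16`, since `G` is increasing.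
On `[1, ∞)` the function `log G` is concave, so `R` is decreasing there and every factor with
`n > m` is at least `1`; the logarithms of the factors are thus eventually nonnegative with
bounded partial sums, which gives (unconditional) convergence of the product.
-/

/-- The eigenvalues `λ_n = i·n + ε·n^{2α}` (for positive integers `n`). -/
noncomputable def lam (ε α : ℝ) (n : ℤ) : ℂ :=
  Complex.I * (n : ℂ) + ((ε * (n.natAbs : ℝ) ^ (2 * α) : ℝ) : ℂ)

open Finset Real

theorem ConcaveOn.sub_le_sub_of_le {𝕜 : Type*} [Field 𝕜] [LinearOrder 𝕜] [IsStrictOrderedRing 𝕜]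
    {s : Set 𝕜} {f : 𝕜 → 𝕜} (hf : ConcaveOn 𝕜 s f) {a b t : 𝕜} (ha : a ∈ s) (hbt : b + t ∈ s)
    (hab : a ≤ b) (ht : 0 ≤ t) : f (b + t) - f b ≤ f (a + t) - f a := by
  rcases hab.eq_or_lt with rfl | hab
  · rfl
  rcases ht.eq_or_lt with rfl | ht
  · simp
  have hb := hf.neg.secant_mono_aux1 ha hbt hab (by linarith)
  have hat := hf.neg.secant_mono_aux1 ha hbt (by linarith : a < a + t) (by linarith)
  simp only [Pi.neg_apply] at hb hat
  nlinarith

theorem summable_of_sum_range_le_of_nonneg_ge {a : ℕ → ℝ} {c : ℝ} (k : ℕ)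
    (hnonneg : ∀ n, k ≤ n → 0 ≤ a n) (hle : ∀ N, k ≤ N → ∑ i ∈ range N, a i ≤ c) :
    Summable a := by
  rw [← summable_nat_add_iff k]
  refine summable_of_sum_range_le (c := c - ∑ i ∈ range k, a i) (fun n => hnonneg _ (by omega))
    fun N => ?_
  have h := hle (k + N) (by omega)
  rw [sum_range_add] at h
  simp only [add_comm _ k]
  linarith

noncomputable def qFactor (G : ℕ → ℝ) (m n : ℕ) : ℝ :=
  if n = 0 ∨ n = m then 1 else G n ^ 2 / (G ((n : ℤ) - m).natAbs * G (m + n))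

noncomputable def shiftRatio (G : ℕ → ℝ) (m k : ℕ) : ℝ := G (k + m) / G k

namespace qFactor

variable {G : ℕ → ℝ} {m : ℕ}

theorem pos (hG : ∀ k, 0 < k → 0 < G k) (n : ℕ) : 0 < qFactor G m n := by
  unfold qFactor
  split_ifs with h
  · exact one_pos
  · have := hG n (by omega)
    have := hG ((n : ℤ) - m).natAbs (by omega)
    have := hG (m + n) (by omega)
    positivity

theorem eq_shiftRatio_div (hG : ∀ k, 0 < k → 0 < G k) {n : ℕ} (hn : m < n) :
    qFactor G m n = shiftRatio G m (n - m) / shiftRatio G m n := by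
  have h0 := hG n (by omega)
  have h1 := hG (n - m) (by omega)
  have h2 := hG (n + m) (by omega)
  rw [qFactor, if_neg (by omega), shiftRatio, shiftRatio, Nat.sub_add_cancel hn.le,
    show ((n : ℤ) - m).natAbs = n - m by omega, add_comm m n]
  field_simp

theorem mul_shiftRatio_of_lt (hG : ∀ k, 0 < k → 0 < G k) {n : ℕ} (hn0 : 0 < n) (hn : n < m) :
    qFactor G m n * shiftRatio G m n = G n / G (m - n) := by
  have h0 := hG n hn0
  have h1 := hG (m - n) (by omega)
  have h2 := hG (n + m) (by omega)
  rw [qFactor, if_neg (by omega), shiftRatio, show ((n : ℤ) - m).natAbs = m - n by omega,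
    add_comm m n]
  field_simp

theorem one_le (hG : ∀ k, 0 < k → 0 < G k) (hR : AntitoneOn (shiftRatio G m) (Set.Ici 1))
    {n : ℕ} (hn : m < n) : 1 ≤ qFactor G m n := by
  have hRn : 0 < shiftRatio G m n := div_pos (hG _ (by omega)) (hG _ (by omega))
  rw [eq_shiftRatio_div hG hn, one_le_div hRn]
  exact hR (Set.mem_Ici.2 (by omega)) (Set.mem_Ici.2 (by omega)) (by omega)

theorem prod_range_mul_prod_shiftRatio (hm : 0 < m) (hG : ∀ k, 0 < k → 0 < G k) {N : ℕ}
    (hN : m < N) :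
    (∏ n ∈ range N, qFactor G m n) * ∏ k ∈ Ico (N - m) N, shiftRatio G m k =
      shiftRatio G m m := by
  induction N, hN using Nat.le_induction with
  | base =>
    have hreflect : ∏ n ∈ Ico 1 m, G (m - n) = ∏ n ∈ Ico 1 m, G n := by
      rw [prod_Ico_reflect G 1 (Nat.le_succ m)]; simp
    have hG0 : ∏ n ∈ Ico 1 m, G n ≠ 0 :=
      prod_ne_zero_iff.2 fun n hn => (hG n (by simp at hn; omega)).ne'
    rw [range_eq_Ico, prod_eq_prod_Ico_succ_bot (by omega), prod_Ico_succ_top (by omega),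
      show m + 1 - m = 1 by omega, prod_Ico_succ_top hm, qFactor, if_pos (Or.inl rfl),
      qFactor, if_pos (Or.inr rfl), one_mul, mul_one, ← mul_assoc, ← prod_mul_distrib,
      prod_congr rfl fun n hn => mul_shiftRatio_of_lt hG (by simp at hn; omega)
        (by simp at hn; omega), prod_div_distrib, hreflect, div_self hG0, one_mul]
  | succ N hN ih =>
    have hR : ∀ k, 0 < k → 0 < shiftRatio G m k := fun k hk =>
      div_pos (hG _ (by omega)) (hG _ hk)
    have hshift : (∏ k ∈ Ico (N - m) N, shiftRatio G m k) * shiftRatio G m N =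
        shiftRatio G m (N - m) * ∏ k ∈ Ico (N + 1 - m) (N + 1), shiftRatio G m k := by
      rw [← prod_Ico_succ_top (by omega), prod_eq_prod_Ico_succ_bot (by omega),
        show N - m + 1 = N + 1 - m by omega]
    rw [prod_range_succ, eq_shiftRatio_div hG hN, ← ih]
    have := hR N (by omega)
    have := hR (N - m) (by omega)
    field_simp
    linear_combination (-∏ n ∈ range N, qFactor G m n) * hshift

theorem prod_range_le (hm : 0 < m) (hG : ∀ k, 0 < k → 0 < G k) (hmono : Monotone G) {N : ℕ}
    (hN : m < N) : ∏ n ∈ range N, qFactor G m n ≤ shiftRatio G m m := by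
  have hR : 1 ≤ ∏ k ∈ Ico (N - m) N, shiftRatio G m k := by
    refine one_le_prod fun k hk => ?_
    rw [shiftRatio, one_le_div (hG k (by simp at hk; omega))]
    exact hmono (Nat.le_add_right k m)
  rw [← prod_range_mul_prod_shiftRatio hm hG hN]
  exact le_mul_of_one_le_right (prod_nonneg fun n _ => (pos hG n).le) hR

theorem multipliable (hm : 0 < m) (hG : ∀ k, 0 < k → 0 < G k) (hmono : Monotone G)
    (hR : AntitoneOn (shiftRatio G m) (Set.Ici 1)) : Multipliable (qFactor G m) := by
  refine Real.multipliable_of_summable_log (pos hG) <|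
    summable_of_sum_range_le_of_nonneg_ge (c := log (shiftRatio G m m)) (m + 1)
      (fun n hn => log_nonneg (one_le hG hR hn)) fun N hN => ?_
  rw [← log_prod fun n _ => (pos hG n).ne']
  exact log_le_log (prod_pos fun n _ => pos hG n) (prod_range_le hm hG hmono hN)

theorem tprod_le (hm : 0 < m) (hG : ∀ k, 0 < k → 0 < G k) (hmono : Monotone G)
    (hR : AntitoneOn (shiftRatio G m) (Set.Ici 1)) :
    ∏' n, qFactor G m n ≤ shiftRatio G m m :=
  le_of_tendsto (multipliable hm hG hmono hR).hasProd.tendsto_prod_nat <|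
    Filter.eventually_atTop.2 ⟨m + 1, fun _ hN => prod_range_le hm hG hmono hN⟩

end qFactor

theorem antitoneOn_shiftRatio_of_concaveOn_log {F : ℝ → ℝ} (hF : ∀ x, 1 ≤ x → 0 < F x)
    (hconc : ConcaveOn ℝ (Set.Ici 1) (fun x => log (F x))) (m : ℕ) :
    AntitoneOn (shiftRatio (fun k : ℕ => F k) m) (Set.Ici 1) := by
  intro j hj k hk hjk
  simp only [Set.mem_Ici] at hj hk
  have hj' : (1 : ℝ) ≤ j := by exact_mod_cast hj
  have hk' : (1 : ℝ) ≤ k := by exact_mod_cast hk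
  have hm : (0 : ℝ) ≤ m := Nat.cast_nonneg m
  have h := hconc.sub_le_sub_of_le (a := j) (b := k) (t := m) (Set.mem_Ici.2 hj')
    (Set.mem_Ici.2 (by linarith)) (by exact_mod_cast hjk) hm
  simp only [shiftRatio, Nat.cast_add]
  rw [← log_le_log_iff (div_pos (hF _ (by linarith)) (hF _ hk'))
    (div_pos (hF _ (by linarith)) (hF _ hj')), log_div (hF _ (by linarith)).ne' (hF _ hk').ne',
    log_div (hF _ (by linarith)).ne' (hF _ hj').ne']
  exact h

noncomputable def normSqLam (ε α x : ℝ) : ℝ := x ^ 2 + ε ^ 2 * x ^ (4 * α)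

theorem norm_lam_sq (ε α : ℝ) (n : ℤ) : ‖lam ε α n‖ ^ 2 = normSqLam ε α n.natAbs := by
  have hsq : ((n.natAbs : ℝ) ^ (2 * α)) ^ 2 = (n.natAbs : ℝ) ^ (4 * α) := by
    rw [← rpow_mul_natCast (Nat.cast_nonneg _)]; ring_nf
  rw [← Complex.normSq_eq_norm_sq, Complex.normSq_apply, normSqLam, ← hsq]
  simp [lam]
  ring

theorem lam_factor_eq_qFactor (ε α : ℝ) (m n : ℕ) :
    (if n = 0 ∨ n = m then (1 : ℝ)
      else ‖lam ε α (n : ℤ)‖ ^ 4 /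
        (‖lam ε α (((n : ℤ) - (m : ℤ)).natAbs : ℤ)‖ ^ 2 * ‖lam ε α ((m : ℤ) + (n : ℤ))‖ ^ 2)) =
      qFactor (fun k => normSqLam ε α k) m n := by
  rw [qFactor, show (4 : ℕ) = 2 * 2 from rfl, pow_mul, norm_lam_sq, norm_lam_sq, norm_lam_sq,
    ← Nat.cast_add, Int.natAbs_natCast, Int.natAbs_natCast, Int.natAbs_natCast]

theorem normSqLam_pos (ε α : ℝ) {x : ℝ} (hx : 0 < x) : 0 < normSqLam ε α x := by
  unfold normSqLam; positivity

theorem normSqLam_mono (ε : ℝ) {α : ℝ} (hα : 0 ≤ α) :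
    MonotoneOn (normSqLam ε α) (Set.Ici 0) := by
  intro x hx y _ hxy
  have := rpow_le_rpow hx hxy (by linarith : 0 ≤ 4 * α)
  unfold normSqLam
  gcongr

theorem normSqLam_two_mul_le (ε : ℝ) {α : ℝ} (hα : α ≤ 1) {x : ℝ} (hx : 0 ≤ x) :
    normSqLam ε α (2 * x) ≤ 16 * normSqLam ε α x := by
  have h2 : (2 : ℝ) ^ (4 * α) ≤ 16 := by
    calc (2 : ℝ) ^ (4 * α) ≤ 2 ^ (4 : ℝ) := rpow_le_rpow_of_exponent_le one_le_two (by linarith)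
      _ = 16 := by norm_num
  have hxα := rpow_nonneg hx (4 * α)
  rw [normSqLam, normSqLam, mul_rpow zero_le_two hx]
  nlinarith [mul_le_mul_of_nonneg_right h2 (mul_nonneg (sq_nonneg ε) hxα)]

theorem hasDerivAt_normSqLam (ε α : ℝ) {x : ℝ} (hx : 0 < x) :
    HasDerivAt (normSqLam ε α) (2 * x + ε ^ 2 * (4 * α) * x ^ (4 * α - 1)) x := by
  refine ((hasDerivAt_pow 2 x).add
    ((hasDerivAt_rpow_const (p := 4 * α) (Or.inl hx.ne')).const_mul (ε ^ 2))).congr_deriv ?_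
  simp only [Nat.cast_ofNat, pow_one, Nat.add_one_sub_one]
  ring

theorem hasDerivAt_deriv_normSqLam (ε α : ℝ) {x : ℝ} (hx : 0 < x) :
    HasDerivAt (fun x => 2 * x + ε ^ 2 * (4 * α) * x ^ (4 * α - 1))
      (2 + ε ^ 2 * (4 * α) * ((4 * α - 1) * x ^ (4 * α - 2))) x := by
  refine (((hasDerivAt_id x).const_mul 2).add
    ((hasDerivAt_rpow_const (p := 4 * α - 1) (Or.inl hx.ne')).const_mul
      (ε ^ 2 * (4 * α)))).congr_deriv ?_
  ring_nf

/-- With `u = ε² x^{4α-2}`, the numerator `G'' G - G'²` of `(log G)''` equals `x²` times this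
quadratic in `u`. -/
theorem log_concavity_numerator_nonpos {α u : ℝ} (hα0 : 0 ≤ α) (hα1 : α < 1) (hu : 0 ≤ u)
    (hu1 : α ≤ 1 / 2 → u ≤ 1) : -2 + (16 * α ^ 2 - 20 * α + 2) * u - 4 * α * u ^ 2 ≤ 0 := by
  rcases le_or_gt α (1 / 2) with hα | hα
  · nlinarith [hu1 hα, mul_nonneg hu (mul_nonneg hα0 (by linarith : 0 ≤ 20 - 16 * α)),
      mul_nonneg hα0 (sq_nonneg u)]
  · nlinarith [mul_nonneg hu (by nlinarith : 0 ≤ -(16 * α ^ 2 - 20 * α + 2)),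
      mul_nonneg hα0 (sq_nonneg u)]

theorem concaveOn_log_normSqLam {ε α : ℝ} (hα0 : 0 ≤ α) (hα1 : α < 1) (hε : |ε| ≤ 1) :
    ConcaveOn ℝ (Set.Ici 1) (fun x => log (normSqLam ε α x)) := by
  have hnum : ∀ x : ℝ, 1 < x →
      (2 + ε ^ 2 * (4 * α) * ((4 * α - 1) * x ^ (4 * α - 2))) * normSqLam ε α x -
        (2 * x + ε ^ 2 * (4 * α) * x ^ (4 * α - 1)) ^ 2 ≤ 0 := by
    intro x hx
    have hx0 : 0 < x := by linarith
    set P := x ^ (4 * α - 2) with hP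
    have h1 : x ^ (4 * α - 1) = P * x := by
      rw [hP, ← rpow_add_one hx0.ne']; ring_nf
    have h2 : x ^ (4 * α) = P * x ^ 2 := by
      rw [hP, ← rpow_add_natCast hx0.ne']; push_cast; ring_nf
    have hu1 : α ≤ 1 / 2 → ε ^ 2 * P ≤ 1 := fun hα => by
      have : P ≤ 1 := rpow_le_one_of_one_le_of_nonpos hx.le (by linarith)
      have : ε ^ 2 ≤ 1 := by rw [← sq_abs]; nlinarith [abs_nonneg ε]
      nlinarith [rpow_nonneg hx0.le (4 * α - 2)]
    have key := log_concavity_numerator_nonpos hα0 hα1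
      (mul_nonneg (sq_nonneg ε) (rpow_nonneg hx0.le _)) hu1
    rw [normSqLam, h1, h2]
    nlinarith [mul_nonpos_of_nonneg_of_nonpos (sq_nonneg x) key]
  refine concaveOn_of_hasDerivWithinAt2_nonpos (convex_Ici 1)
    (f' := fun x => (2 * x + ε ^ 2 * (4 * α) * x ^ (4 * α - 1)) / normSqLam ε α x)
    (f'' := fun x => ((2 + ε ^ 2 * (4 * α) * ((4 * α - 1) * x ^ (4 * α - 2))) * normSqLam ε α x -
        (2 * x + ε ^ 2 * (4 * α) * x ^ (4 * α - 1)) * (2 * x + ε ^ 2 * (4 * α) * x ^ (4 * α - 1)))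
        / normSqLam ε α x ^ 2) ?_ ?_ ?_ ?_
  · intro x hx
    have hx0 : 0 < x := by simp at hx; linarith
    exact ((hasDerivAt_normSqLam ε α hx0).log
      (normSqLam_pos ε α hx0).ne').continuousAt.continuousWithinAt
  all_goals
    intro x hx
    rw [interior_Ici] at hx
    have hx0 : 0 < x := by simp at hx; linarith
  · exact ((hasDerivAt_normSqLam ε α hx0).log (normSqLam_pos ε α hx0).ne').hasDerivWithinAt
  · exact ((hasDerivAt_deriv_normSqLam ε α hx0).div (hasDerivAt_normSqLam ε α hx0)
      (normSqLam_pos ε α hx0).ne').hasDerivWithinAt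
  · rw [← sq]
    exact div_nonpos_of_nonpos_of_nonneg (hnum x hx) (sq_nonneg _)

/-- Bound `Q_m¹ ≤ 16` from the Appendix:
`∏_{n≥1, n≠m} |λ_n|⁴/(|λ_{|n−m|}|²·|λ_{m+n}|²) ≤ 16`
(factors at `n = 0` and `n = m` are set to `1`). -/
theorem stmt13 (α : ℝ) (hα0 : 0 ≤ α) (hα1 : α < 1)
    (ε : ℝ) (hε : ε ∈ Set.Ioo (0 : ℝ) 1) (m : ℕ) (hm : 1 ≤ m) :
    Multipliable (fun n : ℕ =>
      if n = 0 ∨ n = m then (1 : ℝ)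
      else ‖lam ε α (n : ℤ)‖ ^ 4 /
        (‖lam ε α (((n : ℤ) - (m : ℤ)).natAbs : ℤ)‖ ^ 2 *
          ‖lam ε α ((m : ℤ) + (n : ℤ))‖ ^ 2)) ∧
    (∏' n : ℕ,
      if n = 0 ∨ n = m then (1 : ℝ)
      else ‖lam ε α (n : ℤ)‖ ^ 4 /
        (‖lam ε α (((n : ℤ) - (m : ℤ)).natAbs : ℤ)‖ ^ 2 *
          ‖lam ε α ((m : ℤ) + (n : ℤ))‖ ^ 2)) ≤ 16 := by
  set G : ℕ → ℝ := fun k => normSqLam ε α k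
  have hG : ∀ k, 0 < k → 0 < G k := fun k hk => normSqLam_pos ε α (Nat.cast_pos.2 hk)
  have hmono : Monotone G := fun j k hjk =>
    normSqLam_mono ε hα0 (Set.mem_Ici.2 (Nat.cast_nonneg j)) (Set.mem_Ici.2 (Nat.cast_nonneg k))
      (Nat.cast_le.2 hjk)
  have hR : AntitoneOn (shiftRatio G m) (Set.Ici 1) :=
    antitoneOn_shiftRatio_of_concaveOn_log (fun x hx => normSqLam_pos ε α (by linarith))
      (concaveOn_log_normSqLam hα0 hα1 (abs_le.2 ⟨by linarith [hε.1], hε.2.le⟩)) m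
  have h16 : shiftRatio G m m ≤ 16 := by
    rw [shiftRatio, div_le_iff₀ (hG m hm)]
    simpa [G, two_mul] using normSqLam_two_mul_le ε hα1.le (Nat.cast_nonneg (α := ℝ) m)
  simp only [lam_factor_eq_qFactor]
  exact ⟨qFactor.multipliable hm hG hmono hR, (qFactor.tprod_le hm hG hmono hR).trans h16⟩
end

section
/- Let ε ∈ (0,1). If α ∈ (1/2,1), then ∑_{n=1}^{∞} ε·n^{2α}/(n² + ε²·n^{4α}) ≤ 2/(2α−1). If α ∈ [0,1/2), then ∑_{n=2}^{∞} ε·n^{2α}/(n² + ε²·n^{4α}) ≤ ε/(1−2α). -/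
/-!
The summand `ε x ^ (2α) / (x² + ε² x ^ (4α))` at `x = n` is at most `ε x ^ (2α - 2)`
(drop `ε² x ^ (4α)` from the denominator) and at most `x ^ (-2α) / ε` (drop `x²`).

For `α < 1/2`, put `δ = 1 - 2α ∈ (0, 1]`: convexity of `t ^ (-δ)` gives
`ε x ^ (-δ - 1) ≤ (ε / δ) ((x - 1) ^ (-δ) - x ^ (-δ))`, which telescopes to `ε / δ`.

For `α > 1/2`, put `β = 2α - 1 ∈ (0, 1)`: the minimum of the two bounds is decreasing, and its
integral over `(0, ∞)` is `1/β + 1/β`, the two pieces meeting where `ε x ^ β = 1`. The sum is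
compared with this integral by telescoping against an explicit primitive, using the
tangent-line inequalities for the concave `t ^ β` and the convex `t ^ (-β)`.
-/

open Real

lemma mul_rpow_sub_one_mul_sub_le_rpow_sub_rpow {p a b : ℝ} (hp₀ : 0 ≤ p) (hp₁ : p ≤ 1)
    (ha : 0 ≤ a) (hab : a ≤ b) : p * b ^ (p - 1) * (b - a) ≤ b ^ p - a ^ p := by
  rcases hab.eq_or_lt with rfl | hab
  · simp
  have hb : 0 < b := ha.trans_lt hab
  have bernoulli := rpow_one_add_le_one_add_mul_self (s := a / b - 1)
    (by linarith [div_nonneg ha hb.le]) hp₀ hp₁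
  rw [add_sub_cancel, div_rpow ha hb.le, div_le_iff₀ (rpow_pos_of_pos hb p)] at bernoulli
  rw [rpow_sub_one hb.ne']
  have : p * (b ^ p / b) * (b - a) = p * (1 - a / b) * b ^ p := by field_simp
  rw [this]
  linarith

lemma mul_rpow_neg_sub_one_mul_sub_le_rpow_neg_sub_rpow_neg {p a b : ℝ} (hp₀ : 0 ≤ p)
    (hp₁ : p ≤ 1) (ha : 0 < a) (hab : a ≤ b) :
    p * b ^ (-p - 1) * (b - a) ≤ a ^ (-p) - b ^ (-p) := by
  have hb : 0 < b := ha.trans_le hab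
  have hap : 0 < a ^ p := rpow_pos_of_pos ha p
  have hbp : 0 < b ^ p := rpow_pos_of_pos hb p
  have concave := mul_rpow_sub_one_mul_sub_le_rpow_sub_rpow hp₀ hp₁ ha.le hab
  have hapb : a ^ p ≤ b ^ p := rpow_le_rpow ha.le hab hp₀
  rw [rpow_sub_one hb.ne'] at concave
  -- `a ^ (-p) - b ^ (-p) = (b ^ p - a ^ p) / (a ^ p * b ^ p)`, and `a ^ p ≤ b ^ p`
  rw [rpow_sub_one hb.ne', rpow_neg hb.le, rpow_neg ha.le]
  calc p * ((b ^ p)⁻¹ / b) * (b - a) = p * (b ^ p / b) * (b - a) / (b ^ p * b ^ p) := by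
        field_simp
    _ ≤ (b ^ p - a ^ p) / (a ^ p * b ^ p) := by gcongr
    _ = (a ^ p)⁻¹ - (b ^ p)⁻¹ := by field_simp

/-- `|Re λ| / |λ|²` for `λ = i x + ε x ^ (2α)`. -/
noncomputable def reDivNormSq (ε α x : ℝ) : ℝ :=
  ε * x ^ (2 * α) / (x ^ 2 + ε ^ 2 * x ^ (4 * α))

section reDivNormSq

variable {ε α x : ℝ}

lemma reDivNormSq_nonneg (hε : 0 ≤ ε) (hx : 0 ≤ x) : 0 ≤ reDivNormSq ε α x := by
  unfold reDivNormSq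
  positivity

lemma reDivNormSq_le_mul_rpow (hε : 0 ≤ ε) (hx : 0 < x) :
    reDivNormSq ε α x ≤ ε * x ^ (2 * α - 2) := by
  rw [rpow_sub hx, rpow_two, ← mul_div_assoc]
  unfold reDivNormSq
  gcongr
  exact le_add_of_nonneg_right (by positivity)

lemma reDivNormSq_le_rpow_div (hε : 0 < ε) (hx : 0 < x) :
    reDivNormSq ε α x ≤ x ^ (-(2 * α)) / ε := by
  have h4α : x ^ (4 * α) = x ^ (2 * α) * x ^ (2 * α) := by
    rw [← rpow_add hx]; ring_nf
  calc reDivNormSq ε α x ≤ ε * x ^ (2 * α) / (ε ^ 2 * x ^ (4 * α)) := by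
        unfold reDivNormSq
        have : 0 < x ^ (2 * α) := by positivity
        gcongr
        exact le_add_of_nonneg_left (by positivity)
    _ = x ^ (-(2 * α)) / ε := by
        rw [h4α, rpow_neg hx.le]
        have : 0 < x ^ (2 * α) := by positivity
        field_simp

end reDivNormSq

/-- A primitive of `t ↦ min (ε * t ^ (β - 1)) (t ^ (-β - 1) / ε)`: the minimum switches
branches at `c = ε ^ (-β⁻¹)`, where `ε * c ^ β = 1` and both branches of the primitive
equal `1 / β`. -/
noncomputable def envelopePrimitive (ε β t : ℝ) : ℝ :=
  if t ≤ ε ^ (-β⁻¹) then ε * t ^ β / β else (2 - t ^ (-β) / ε) / β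

section envelopePrimitive

variable {ε β : ℝ}

lemma envelopePrimitive_zero (hε : 0 < ε) (hβ : 0 < β) : envelopePrimitive ε β 0 = 0 := by
  rw [envelopePrimitive, if_pos (rpow_nonneg hε.le _), zero_rpow hβ.ne', mul_zero, zero_div]

lemma envelopePrimitive_of_ge (hε : 0 < ε) (hβ : 0 < β) {t : ℝ} (ht : ε ^ (-β⁻¹) ≤ t) :
    envelopePrimitive ε β t = (2 - t ^ (-β) / ε) / β := by
  rcases ht.eq_or_lt with rfl | ht
  · rw [envelopePrimitive, if_pos le_rfl, ← rpow_mul hε.le, ← rpow_mul hε.le,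
      neg_mul_neg, inv_mul_cancel₀ hβ.ne', neg_mul, inv_mul_cancel₀ hβ.ne', rpow_one,
      rpow_neg_one]
    field_simp
    ring
  · rw [envelopePrimitive, if_neg ht.not_ge]

lemma envelopePrimitive_le (hε : 0 < ε) (hβ : 0 < β) {t : ℝ} (ht : 0 ≤ t) :
    envelopePrimitive ε β t ≤ 2 / β := by
  by_cases htc : t ≤ ε ^ (-β⁻¹)
  · have : ε * t ^ β ≤ 1 := by
      calc ε * t ^ β ≤ ε * (ε ^ (-β⁻¹)) ^ β := by gcongr
        _ = 1 := by rw [← rpow_mul hε.le, neg_mul, inv_mul_cancel₀ hβ.ne', rpow_neg_one,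
              mul_inv_cancel₀ hε.ne']
    rw [envelopePrimitive, if_pos htc]
    gcongr
    linarith
  · rw [envelopePrimitive_of_ge hε hβ (le_of_not_ge htc)]
    have : 0 < t ^ (-β) / ε := by
      have := rpow_pos_of_pos ((rpow_pos_of_pos hε _).trans (not_le.mp htc)) (-β)
      positivity
    gcongr
    linarith

lemma mul_min_le_envelopePrimitive_sub (hε : 0 < ε) (hβ₀ : 0 < β) (hβ₁ : β ≤ 1)
    {a b : ℝ} (ha : 0 ≤ a) (hab : a ≤ b) :
    (b - a) * min (ε * b ^ (β - 1)) (b ^ (-β - 1) / ε) ≤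
      envelopePrimitive ε β b - envelopePrimitive ε β a := by
  set c := ε ^ (-β⁻¹)
  have hc : 0 < c := rpow_pos_of_pos hε _
  have lower {a b : ℝ} (ha : 0 ≤ a) (hab : a ≤ b) (hbc : b ≤ c) :
      (b - a) * (ε * b ^ (β - 1)) ≤ envelopePrimitive ε β b - envelopePrimitive ε β a := by
    rw [envelopePrimitive, envelopePrimitive, if_pos hbc, if_pos (hab.trans hbc),
      ← sub_div, ← mul_sub, le_div_iff₀ hβ₀]
    have := mul_rpow_sub_one_mul_sub_le_rpow_sub_rpow hβ₀.le hβ₁ ha hab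
    nlinarith
  have upper {a b : ℝ} (hca : c ≤ a) (hab : a ≤ b) :
      (b - a) * (b ^ (-β - 1) / ε) ≤ envelopePrimitive ε β b - envelopePrimitive ε β a := by
    rw [envelopePrimitive_of_ge hε hβ₀ hca, envelopePrimitive_of_ge hε hβ₀ (hca.trans hab),
      ← sub_div, le_div_iff₀ hβ₀]
    have :=
      mul_rpow_neg_sub_one_mul_sub_le_rpow_neg_sub_rpow_neg hβ₀.le hβ₁ (hc.trans_le hca) hab
    field_simp
    nlinarith
  rcases le_total b c with hbc | hcb
  · exact (mul_le_mul_of_nonneg_left (min_le_left _ _) (by linarith)).trans (lower ha hab hbc)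
  rcases le_total c a with hca | hac
  · exact (mul_le_mul_of_nonneg_left (min_le_right _ _) (by linarith)).trans (upper hca hab)
  have hmin : min (ε * b ^ (β - 1)) (b ^ (-β - 1) / ε) ≤ ε * c ^ (β - 1) :=
    (min_le_left _ _).trans <| by
      gcongr ?_ * ?_
      exact rpow_le_rpow_of_nonpos hc hcb (by linarith)
  calc (b - a) * min (ε * b ^ (β - 1)) (b ^ (-β - 1) / ε)
      = (c - a) * min (ε * b ^ (β - 1)) (b ^ (-β - 1) / ε)
        + (b - c) * min (ε * b ^ (β - 1)) (b ^ (-β - 1) / ε) := by ring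
    _ ≤ (c - a) * (ε * c ^ (β - 1)) + (b - c) * (b ^ (-β - 1) / ε) :=
        add_le_add (mul_le_mul_of_nonneg_left hmin (by linarith))
          (mul_le_mul_of_nonneg_left (min_le_right _ _) (by linarith))
    _ ≤ _ := by linarith [lower ha hac le_rfl, upper le_rfl hcb]

end envelopePrimitive

lemma summable_and_tsum_le_of_le_sub {f G : ℕ → ℝ} {B : ℝ} (hf : ∀ n, 0 ≤ f n)
    (hfG : ∀ n, f n ≤ G (n + 1) - G n) (hG : ∀ n, G n ≤ B) :
    Summable f ∧ ∑' n, f n ≤ B - G 0 := by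
  have hsum (N : ℕ) : ∑ n ∈ Finset.range N, f n ≤ B - G 0 :=
    calc ∑ n ∈ Finset.range N, f n ≤ ∑ n ∈ Finset.range N, (G (n + 1) - G n) :=
          Finset.sum_le_sum fun n _ => hfG n
      _ = G N - G 0 := Finset.sum_range_sub G N
      _ ≤ B - G 0 := by linarith [hG N]
  exact ⟨summable_of_sum_range_le hf hsum, Real.tsum_le_of_sum_range_le hf hsum⟩

lemma summable_and_tsum_reDivNormSq_add_one_le {ε α : ℝ} (hε : 0 < ε) (hα₁ : 1 / 2 < α)
    (hα₂ : α < 1) :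
    Summable (fun n : ℕ => reDivNormSq ε α (n + 1)) ∧
      ∑' n : ℕ, reDivNormSq ε α (n + 1) ≤ 2 / (2 * α - 1) := by
  set β := 2 * α - 1
  have hβ : 0 < β := by linarith
  have key (n : ℕ) : reDivNormSq ε α (n + 1) ≤
      envelopePrimitive ε β ((n + 1 : ℕ) : ℝ) - envelopePrimitive ε β n := by
    have hx : (0 : ℝ) < n + 1 := by positivity
    have := mul_min_le_envelopePrimitive_sub hε hβ (by linarith) n.cast_nonneg
      (show (n : ℝ) ≤ (n + 1 : ℕ) by push_cast; linarith)
    push_cast at this ⊢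
    rw [add_sub_cancel_left, one_mul, show β - 1 = 2 * α - 2 by ring,
      show -β - 1 = -(2 * α) by ring] at this
    exact (le_min (reDivNormSq_le_mul_rpow hε.le hx) (reDivNormSq_le_rpow_div hε hx)).trans this
  simpa only [Nat.cast_zero, envelopePrimitive_zero hε hβ, sub_zero] using
    summable_and_tsum_le_of_le_sub (fun n => reDivNormSq_nonneg hε.le (by positivity)) key
      (fun n => envelopePrimitive_le hε hβ n.cast_nonneg)

lemma summable_and_tsum_reDivNormSq_add_two_le {ε α : ℝ} (hε : 0 < ε) (hα₀ : 0 ≤ α)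
    (hα₁ : α < 1 / 2) :
    Summable (fun n : ℕ => reDivNormSq ε α (n + 2)) ∧
      ∑' n : ℕ, reDivNormSq ε α (n + 2) ≤ ε / (1 - 2 * α) := by
  set δ := 1 - 2 * α
  have hδ : 0 < δ := by linarith
  set G : ℕ → ℝ := fun n => -(ε / δ) * ((n : ℝ) + 1) ^ (-δ)
  have key (n : ℕ) : reDivNormSq ε α (n + 2) ≤ G (n + 1) - G n := by
    have hx : (0 : ℝ) < n + 2 := by positivity
    have := mul_rpow_neg_sub_one_mul_sub_le_rpow_neg_sub_rpow_neg hδ.le (by linarith)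
      (show (0 : ℝ) < n + 1 by positivity) (show (n : ℝ) + 1 ≤ n + 2 by linarith)
    rw [show -δ - 1 = 2 * α - 2 by ring, show (n : ℝ) + 2 - (n + 1) = 1 by ring,
      mul_one] at this
    calc reDivNormSq ε α (n + 2) ≤ ε * ((n : ℝ) + 2) ^ (2 * α - 2) :=
          reDivNormSq_le_mul_rpow hε.le hx
      _ = ε / δ * (δ * ((n : ℝ) + 2) ^ (2 * α - 2)) := by field_simp
      _ ≤ ε / δ * (((n : ℝ) + 1) ^ (-δ) - ((n : ℝ) + 2) ^ (-δ)) := by gcongr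
      _ = G (n + 1) - G n := by
          simp only [G, Nat.cast_succ, add_assoc, one_add_one_eq_two]
          ring
  have hG (n : ℕ) : G n ≤ 0 := by
    have : 0 < ε / δ * ((n : ℝ) + 1) ^ (-δ) := by positivity
    simp only [G, neg_mul]
    linarith
  simpa only [G, Nat.cast_zero, zero_add, one_rpow, mul_one, zero_sub, neg_neg] using
    summable_and_tsum_le_of_le_sub (fun n => reDivNormSq_nonneg hε.le (by positivity)) key hG

/-- bounds for `∑ ε·n^{2α}/(n² + ε²n^{4α})`, i.e. `∑ |Re λ_n|/|λ_n|²`: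
over `n ≥ 1` by `2/(2α−1)` when `α ∈ (1/2,1)`, and over `n ≥ 2` by `ε/(1−2α)`
when `α ∈ [0,1/2)`. -/
theorem stmt19 (ε : ℝ) (hε : ε ∈ Set.Ioo (0 : ℝ) 1) (α : ℝ) :
    (1 / 2 < α → α < 1 →
      Summable (fun n : ℕ =>
        ε * ((n : ℝ) + 1) ^ (2 * α) /
          (((n : ℝ) + 1) ^ 2 + ε ^ 2 * ((n : ℝ) + 1) ^ (4 * α))) ∧
      (∑' n : ℕ,
        ε * ((n : ℝ) + 1) ^ (2 * α) /
          (((n : ℝ) + 1) ^ 2 + ε ^ 2 * ((n : ℝ) + 1) ^ (4 * α))) ≤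
        2 / (2 * α - 1)) ∧
    (0 ≤ α → α < 1 / 2 →
      Summable (fun n : ℕ =>
        ε * ((n : ℝ) + 2) ^ (2 * α) /
          (((n : ℝ) + 2) ^ 2 + ε ^ 2 * ((n : ℝ) + 2) ^ (4 * α))) ∧
      (∑' n : ℕ,
        ε * ((n : ℝ) + 2) ^ (2 * α) /
          (((n : ℝ) + 2) ^ 2 + ε ^ 2 * ((n : ℝ) + 2) ^ (4 * α))) ≤
        ε / (1 - 2 * α)) :=
  ⟨summable_and_tsum_reDivNormSq_add_one_le hε.1,
    summable_and_tsum_reDivNormSq_add_two_le hε.1⟩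
end
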